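/- For all natural numbers p and ℓ, the p-th central moment of ssac(f), as f ranges uniformly over the 2^ℓ binary sequences of length ℓ, equals the sum over all contributory partitions 𝒫 ∈ Con(p) of the cardinality |As(𝒫,=,ℓ)|. -/

import Mathlib

open scoped BigOperators

/-- The binary sequence of length `ℓ` determined by the sign pattern `σ`:
it takes values `±1` on `{0, …, ℓ-1}` and `0` elsewhere. -/
noncomputable def seq (ℓ : ℕ) (σ : Fin ℓ → Bool) : ℤ → ℝ := fun j =>
  if h : 0 ≤ j ∧ j < (ℓ : ℤ) then (if σ ⟨j.toNat, by omega⟩ then 1 else -1) else 0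

/-- Aperiodic autocorrelation of `f` at shift `s`. -/
noncomputable def autocorr (f : ℤ → ℝ) (s : ℤ) : ℝ := ∑ᶠ j : ℤ, f (j + s) * f j

/-- Sum of squares of all autocorrelation values. -/
noncomputable def ssac (f : ℤ → ℝ) : ℝ := ∑ᶠ s : ℤ, autocorr f s ^ 2

/-- Expected value of `v(f)` as `f` ranges uniformly over the `2^ℓ` binary
sequences of length `ℓ`. -/
noncomputable def expect (ℓ : ℕ) (v : (ℤ → ℝ) → ℝ) : ℝ :=
  (∑ σ : Fin ℓ → Bool, v (seq ℓ σ)) / 2 ^ ℓ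

/-- The `p`-th central moment of `v(f)` over binary sequences of length `ℓ`. -/
noncomputable def cmom (p ℓ : ℕ) (v : (ℤ → ℝ) → ℝ) : ℝ :=
  expect ℓ fun f => (v f - expect ℓ v) ^ p

/-- The autocorrelation demerit factor of a binary sequence of length `ℓ`. -/
noncomputable def ADF (ℓ : ℕ) (f : ℤ → ℝ) : ℝ := -1 + ssac f / (ℓ : ℝ) ^ 2
/-- The index set `[p] × [2] × [2]` of the terms of a system of `p` equations,
each with two sides of two terms each. -/
abbrev Idx (p : ℕ) : Type := Fin p × Fin 2 × Fin 2

/-- `β` and `γ` lie in a common class of `𝔓`. -/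
def MemSameClass {α : Type*} (𝔓 : Set (Set α)) (β γ : α) : Prop :=
  ∃ P ∈ 𝔓, β ∈ P ∧ γ ∈ P

/-- The assignment `τ` induces the partition `𝔓`: two indices get equal values
iff they lie in a common class of `𝔓`. -/
def Induces {α : Type*} (τ : α → ℕ) (𝔓 : Set (Set α)) : Prop :=
  ∀ β γ, τ β = τ γ ↔ MemSameClass 𝔓 β γ

/-- `As([p],=,ℓ)`: assignments with all values in `[ℓ]` satisfying
`τ(e,0,0)+τ(e,0,1) = τ(e,1,0)+τ(e,1,1)` for every equation `e`. -/
def AsEq (p ℓ : ℕ) : Set (Idx p → ℕ) :=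
  {τ | (∀ γ, τ γ < ℓ) ∧
    ∀ e : Fin p, τ (e, 0, 0) + τ (e, 0, 1) = τ (e, 1, 0) + τ (e, 1, 1)}

/-- `As(𝔓,=,ℓ)`: the assignments in `As([p],=,ℓ)` that induce the partition `𝔓`. -/
def AsPart (p ℓ : ℕ) (𝔓 : Set (Set (Idx p))) : Set (Idx p → ℕ) :=
  {τ ∈ AsEq p ℓ | Induces τ 𝔓}

/-- A partition `𝔓` is satisfiable if `As(𝔓,=,ℓ)` is nonempty for some `ℓ`. -/
def Satisfiable (p : ℕ) (𝔓 : Set (Set (Idx p))) : Prop :=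
  ∃ ℓ : ℕ, (AsPart p ℓ 𝔓).Nonempty

/-- The restriction of `𝔓` to `F ⊆ [p]`: the nonempty intersections of classes
of `𝔓` with `F × [2] × [2]`. -/
def restrictPart (p : ℕ) (F : Set (Fin p)) (𝔓 : Set (Set (Idx p))) : Set (Set (Idx p)) :=
  {Q | Q.Nonempty ∧ ∃ P ∈ 𝔓, Q = P ∩ {x : Idx p | x.1 ∈ F}}

/-- A collection of classes is even if every class has even cardinality. -/
def IsEvenPart (p : ℕ) (𝔓 : Set (Set (Idx p))) : Prop :=
  ∀ P ∈ 𝔓, Even P.ncard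

/-- Globally even, locally odd: `𝔓` is even but no restriction `𝔓_{{e}}` is even. -/
def GELO (p : ℕ) (𝔓 : Set (Set (Idx p))) : Prop :=
  IsEvenPart p 𝔓 ∧ ∀ e : Fin p, ¬ IsEvenPart p (restrictPart p {e} 𝔓)

/-- `ConPart(p)`: the contributory partitions of `[p] × [2] × [2]`, i.e. the
partitions that are globally even, locally odd and satisfiable. -/
def ConPart (p : ℕ) : Set (Set (Set (Idx p))) :=
  {𝔓 | Setoid.IsPartition 𝔓 ∧ GELO p 𝔓 ∧ Satisfiable p 𝔓}

/-- The group `W^(p)` of permutations of `[p] × [2] × [2]` that permute the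
equations, the sides of each equation, and the places on each side. -/
def Wgroup (p : ℕ) : Set (Equiv.Perm (Idx p)) :=
  {π | ∃ (ε : Equiv.Perm (Fin p)) (σ : Fin p → Equiv.Perm (Fin 2))
      (Φ : Fin p → Fin 2 → Equiv.Perm (Fin 2)),
    ∀ x : Idx p, π x = (ε x.1, σ (ε x.1) x.2.1, Φ (ε x.1) (σ (ε x.1) x.2.1) x.2.2)}

/-- The action of a permutation `π` on a partition: `π(𝔓) = {π(P) : P ∈ 𝔓}`. -/
def mapPart (p : ℕ) (π : Equiv.Perm (Idx p)) (𝔓 : Set (Set (Idx p))) : Set (Set (Idx p)) :=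
  (fun P => (π : Idx p → Idx p) '' P) '' 𝔓

/-- `𝔓` and `𝔔` are isomorphic if `𝔔 = π(𝔓)` for some `π ∈ W^(p)`. -/
def Isomorphic (p : ℕ) (𝔓 𝔔 : Set (Set (Idx p))) : Prop :=
  ∃ π ∈ Wgroup p, 𝔔 = mapPart p π 𝔓

/-- `Isom(p)`: the set of isomorphism classes of contributory partitions. -/
def IsomCls (p : ℕ) : Set (Set (Set (Set (Idx p)))) :=
  {C | ∃ 𝔓 ∈ ConPart p, C = {𝔔 | Isomorphic p 𝔓 𝔔}}

open Finset

/-- sign value at natural index -/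
noncomputable def xval (ℓ : ℕ) (σ : Fin ℓ → Bool) (n : ℕ) : ℝ :=
  if h : n < ℓ then (if σ ⟨n, h⟩ then 1 else -1) else 0

lemma seq_eq_xval {ℓ : ℕ} (σ : Fin ℓ → Bool) {j : ℤ} (hj : 0 ≤ j) :
    seq ℓ σ j = xval ℓ σ j.toNat := by
  unfold seq xval
  by_cases h : j < (ℓ : ℤ)
  · rw [dif_pos ⟨hj, h⟩, dif_pos (by omega)]
  · rw [dif_neg (by omega), dif_neg (by omega)]

lemma seq_eq_zero {ℓ : ℕ} (σ : Fin ℓ → Bool) {j : ℤ} (hj : ¬(0 ≤ j ∧ j < (ℓ:ℤ))) :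
    seq ℓ σ j = 0 := by unfold seq; rw [dif_neg hj]

lemma seq_ne_zero {ℓ : ℕ} (σ : Fin ℓ → Bool) {j : ℤ} (h : seq ℓ σ j ≠ 0) :
    0 ≤ j ∧ j < (ℓ:ℤ) := by
  by_contra hc; exact h (seq_eq_zero σ hc)

lemma xval_mul_self {ℓ : ℕ} (σ : Fin ℓ → Bool) {n : ℕ} (h : n < ℓ) :
    xval ℓ σ n * xval ℓ σ n = 1 := by
  unfold xval; rw [dif_pos h]; split <;> norm_num

/-- product of xvals over a finset, grouped by value -/
lemma prod_xval_pow {ι : Type*} {ℓ : ℕ} (σ : Fin ℓ → Bool) (s : Finset ι) (τ : ι → ℕ)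
    (h : ∀ β ∈ s, τ β < ℓ) :
    ∏ β ∈ s, xval ℓ σ (τ β)
      = ∏ n ∈ Finset.range ℓ, xval ℓ σ n ^ #(s.filter fun β => τ β = n) := by
  classical
  rw [Finset.prod_comp]
  refine Finset.prod_subset ?_ ?_
  · intro n hn
    simp only [Finset.mem_image] at hn
    obtain ⟨β, hβ, rfl⟩ := hn
    exact Finset.mem_range.2 (h β hβ)
  · intro n _ hn
    have : s.filter (fun β => τ β = n) = ∅ := by
      refine Finset.filter_eq_empty_iff.2 ?_
      intro β hβ hc
      exact hn (Finset.mem_image.2 ⟨β, hβ, hc⟩)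
    rw [this]; simp

lemma prod_xval_eq_one {ι : Type*} {ℓ : ℕ} (σ : Fin ℓ → Bool) (s : Finset ι) (τ : ι → ℕ)
    (h : ∀ β ∈ s, τ β < ℓ) (he : ∀ n, Even (#(s.filter fun β => τ β = n))) :
    ∏ β ∈ s, xval ℓ σ (τ β) = 1 := by
  classical
  rw [prod_xval_pow σ s τ h]
  refine Finset.prod_eq_one ?_
  intro n hn
  obtain ⟨k, hk⟩ := he n
  rw [hk, pow_add, ← mul_pow, xval_mul_self σ (Finset.mem_range.1 hn), one_pow]

lemma sum_prod_xval_aux {ι : Type*} {ℓ : ℕ} (s : Finset ι) (τ : ι → ℕ)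
    (h : ∀ β ∈ s, τ β < ℓ) :
    ∑ σ : Fin ℓ → Bool, ∏ β ∈ s, xval ℓ σ (τ β)
      = ∏ i : Fin ℓ, ((1:ℝ) ^ (#(s.filter fun β => τ β = (i:ℕ)))
          + (-1:ℝ) ^ (#(s.filter fun β => τ β = (i:ℕ)))) := by
  classical
  have step1 : ∀ σ : Fin ℓ → Bool, ∏ β ∈ s, xval ℓ σ (τ β)
      = ∏ i : Fin ℓ, ((if σ i then (1:ℝ) else -1)) ^ (#(s.filter fun β => τ β = (i:ℕ))) := by
    intro σ
    rw [prod_xval_pow σ s τ h, ← Fin.prod_univ_eq_prod_range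
      (fun n => xval ℓ σ n ^ #(s.filter fun β => τ β = n)) ℓ]
    refine Finset.prod_congr rfl ?_
    intro i _
    congr 1
    unfold xval
    rw [dif_pos i.isLt]
  simp only [step1]
  have key := Finset.prod_univ_sum (fun _ : Fin ℓ => (Finset.univ : Finset Bool))
      (fun (i : Fin ℓ) (b : Bool) => ((if b then (1:ℝ) else -1)) ^ (#(s.filter fun β => τ β = (i:ℕ))))
  rw [Fintype.piFinset_univ] at key
  rw [← key]
  refine Finset.prod_congr rfl ?_
  intro i _
  rw [Fintype.sum_bool]
  norm_num

lemma sum_prod_xval_even {ι : Type*} {ℓ : ℕ} (s : Finset ι) (τ : ι → ℕ)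
    (h : ∀ β ∈ s, τ β < ℓ) (hall : ∀ n, Even (#(s.filter fun β => τ β = n))) :
    ∑ σ : Fin ℓ → Bool, ∏ β ∈ s, xval ℓ σ (τ β) = (2:ℝ)^ℓ := by
  rw [sum_prod_xval_aux s τ h]
  have : ∀ i : Fin ℓ, ((1:ℝ) ^ (#(s.filter fun β => τ β = (i:ℕ)))
      + (-1:ℝ) ^ (#(s.filter fun β => τ β = (i:ℕ)))) = 2 := by
    intro i
    rw [(hall (i:ℕ)).neg_one_pow, one_pow]
    norm_num
  simp only [this]
  simp [Finset.prod_const]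

lemma sum_prod_xval_odd {ι : Type*} {ℓ : ℕ} (s : Finset ι) (τ : ι → ℕ)
    (h : ∀ β ∈ s, τ β < ℓ) {n : ℕ} (hn : ¬ Even (#(s.filter fun β => τ β = n))) :
    ∑ σ : Fin ℓ → Bool, ∏ β ∈ s, xval ℓ σ (τ β) = 0 := by
  classical
  rw [sum_prod_xval_aux s τ h]
  have hnl : n < ℓ := by
    by_contra hc
    have : s.filter (fun β => τ β = n) = ∅ :=
      Finset.filter_eq_empty_iff.2 (fun β hβ hb => hc (hb ▸ h β hβ))
    rw [this] at hn; simp at hn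
  refine Finset.prod_eq_zero (Finset.mem_univ (⟨n, hnl⟩ : Fin ℓ)) ?_
  rw [(Nat.not_even_iff_odd.1 hn).neg_one_pow, one_pow]
  norm_num

def eqnOK (p : ℕ) (τ : Idx p → ℕ) : Prop :=
  ∀ e : Fin p, τ (e, 0, 0) + τ (e, 0, 1) = τ (e, 1, 0) + τ (e, 1, 1)

open Classical in
noncomputable def Tfin (p ℓ : ℕ) : Finset (Idx p → ℕ) :=
  (Fintype.piFinset (fun _ : Idx p => Finset.range ℓ)).filter (eqnOK p)

lemma mem_Tfin {p ℓ : ℕ} {τ : Idx p → ℕ} :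
    τ ∈ Tfin p ℓ ↔ (∀ γ, τ γ < ℓ) ∧ eqnOK p τ := by
  classical
  simp [Tfin, Fintype.mem_piFinset, Finset.mem_filter, Finset.mem_range]

lemma autocorr_seq {ℓ : ℕ} (σ : Fin ℓ → Bool) (s : ℤ) :
    autocorr (seq ℓ σ) s = ∑ j ∈ Finset.Ico (0:ℤ) (ℓ:ℤ), seq ℓ σ (j + s) * seq ℓ σ j := by
  refine finsum_eq_sum_of_support_subset _ ?_
  intro j hj
  simp only [Function.mem_support] at hj
  have : seq ℓ σ j ≠ 0 := fun h => hj (by rw [h, mul_zero])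
  have := seq_ne_zero σ this
  simp only [Finset.coe_Ico, Set.mem_Ico]
  exact ⟨this.1, this.2⟩

lemma ssac_seq_Ioo {ℓ : ℕ} (σ : Fin ℓ → Bool) :
    ssac (seq ℓ σ) = ∑ s ∈ Finset.Ioo (-(ℓ:ℤ)) (ℓ:ℤ), autocorr (seq ℓ σ) s ^ 2 := by
  refine finsum_eq_sum_of_support_subset _ ?_
  intro s hs
  simp only [Function.mem_support] at hs
  have hne : autocorr (seq ℓ σ) s ≠ 0 := fun h => hs (by rw [h]; ring)
  rw [autocorr_seq] at hne
  obtain ⟨j, hj, hjne⟩ := Finset.exists_ne_zero_of_sum_ne_zero hne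
  have h1 := seq_ne_zero σ (show seq ℓ σ (j+s) ≠ 0 from fun h => hjne (by rw [h, zero_mul]))
  have h2 := seq_ne_zero σ (show seq ℓ σ j ≠ 0 from fun h => hjne (by rw [h, mul_zero]))
  simp only [Finset.coe_Ioo, Set.mem_Ioo]
  omega


lemma ssac_seq_Tfin {ℓ : ℕ} (σ : Fin ℓ → Bool) :
    ssac (seq ℓ σ) = ∑ τ ∈ Tfin 1 ℓ, ∏ β : Idx 1, xval ℓ σ (τ β) := by
  classical
  rw [ssac_seq_Ioo]
  have sq : ∀ s : ℤ, autocorr (seq ℓ σ) s ^ 2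
      = ∑ j ∈ Finset.Ico (0:ℤ) (ℓ:ℤ), ∑ k ∈ Finset.Ico (0:ℤ) (ℓ:ℤ),
          (seq ℓ σ (j + s) * seq ℓ σ j) * (seq ℓ σ (k + s) * seq ℓ σ k) := by
    intro s
    rw [autocorr_seq, sq, Finset.sum_mul_sum]
  simp only [sq]
  have comb : ∑ s ∈ Finset.Ioo (-(ℓ:ℤ)) (ℓ:ℤ), ∑ j ∈ Finset.Ico (0:ℤ) (ℓ:ℤ), ∑ k ∈ Finset.Ico (0:ℤ) (ℓ:ℤ),
      (seq ℓ σ (j + s) * seq ℓ σ j) * (seq ℓ σ (k + s) * seq ℓ σ k)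
      = ∑ x ∈ Finset.Ioo (-(ℓ:ℤ)) (ℓ:ℤ) ×ˢ Finset.Ico (0:ℤ) (ℓ:ℤ) ×ˢ Finset.Ico (0:ℤ) (ℓ:ℤ),
        (seq ℓ σ (x.2.1 + x.1) * seq ℓ σ x.2.1) * (seq ℓ σ (x.2.2 + x.1) * seq ℓ σ x.2.2) := by
    rw [Finset.sum_product]
    refine Finset.sum_congr rfl (fun s _ => ?_)
    rw [Finset.sum_product]
  rw [comb]
  rw [show ∑ x ∈ Finset.Ioo (-(ℓ:ℤ)) (ℓ:ℤ) ×ˢ Finset.Ico (0:ℤ) (ℓ:ℤ) ×ˢ Finset.Ico (0:ℤ) (ℓ:ℤ),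
        (seq ℓ σ (x.2.1 + x.1) * seq ℓ σ x.2.1) * (seq ℓ σ (x.2.2 + x.1) * seq ℓ σ x.2.2)
      = ∑ x ∈ (Finset.Ioo (-(ℓ:ℤ)) (ℓ:ℤ) ×ˢ Finset.Ico (0:ℤ) (ℓ:ℤ) ×ˢ Finset.Ico (0:ℤ) (ℓ:ℤ)).filter
          (fun x : ℤ × ℤ × ℤ => 0 ≤ x.2.1 + x.1 ∧ x.2.1 + x.1 < (ℓ:ℤ) ∧ 0 ≤ x.2.2 + x.1 ∧ x.2.2 + x.1 < (ℓ:ℤ)),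
        (seq ℓ σ (x.2.1 + x.1) * seq ℓ σ x.2.1) * (seq ℓ σ (x.2.2 + x.1) * seq ℓ σ x.2.2) from by
    refine (Finset.sum_filter_of_ne ?_).symm
    intro x hx hne
    by_contra hc
    refine hne ?_
    rcases Classical.em (0 ≤ x.2.1 + x.1 ∧ x.2.1 + x.1 < (ℓ:ℤ)) with h1 | h1
    · have h2 : ¬(0 ≤ x.2.2 + x.1 ∧ x.2.2 + x.1 < (ℓ:ℤ)) := fun h2 => hc ⟨h1.1, h1.2, h2.1, h2.2⟩
      rw [seq_eq_zero σ h2]; ring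
    · rw [seq_eq_zero σ h1]; ring]
  refine Finset.sum_nbij' (i := fun x : ℤ × ℤ × ℤ => (fun β : Idx 1 =>
      ![![(x.2.1 + x.1).toNat, x.2.2.toNat], ![(x.2.2 + x.1).toNat, x.2.1.toNat]] β.2.1 β.2.2))
    (j := fun τ : Idx 1 → ℕ => (((τ (0,0,0) : ℤ) - (τ (0,1,1) : ℤ)), ((τ (0,1,1) : ℤ), (τ (0,0,1) : ℤ))))
    ?_ ?_ ?_ ?_ ?_
  · -- maps into Tfin
    intro x hx
    simp only [Finset.mem_filter, Finset.mem_product, Finset.mem_Ioo, Finset.mem_Ico] at hx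
    obtain ⟨⟨hA, ⟨hB1a, hB1b⟩, hB2a, hB2b⟩, hc1, hc2, hc3, hc4⟩ := hx
    rw [mem_Tfin]
    constructor
    · rintro ⟨e, y, z⟩
      fin_cases y <;> fin_cases z <;> simp <;> omega
    · intro e
      simp
      omega
  · -- maps back into the filtered triple set
    intro τ hτ
    rw [mem_Tfin] at hτ
    obtain ⟨hlt, heq⟩ := hτ
    have h00 := hlt (0,0,0); have h01 := hlt (0,0,1); have h10 := hlt (0,1,0); have h11 := hlt (0,1,1)
    have he := heq 0
    simp only [Prod.mk_zero_zero, Prod.mk_one_one] at h00 h01 h10 h11 he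
    simp only [Finset.mem_filter, Finset.mem_product, Finset.mem_Ioo, Finset.mem_Ico,
      Prod.mk_zero_zero, Prod.mk_one_one]
    refine ⟨⟨⟨by omega, by omega⟩, ⟨by omega, by omega⟩, by omega, by omega⟩, by omega, by omega, by omega, by omega⟩
  · -- left inverse
    intro x hx
    simp only [Finset.mem_filter, Finset.mem_product, Finset.mem_Ioo, Finset.mem_Ico] at hx
    obtain ⟨⟨hA, ⟨hB1a, hB1b⟩, hB2a, hB2b⟩, hc1, hc2, hc3, hc4⟩ := hx
    simp only [Matrix.cons_val_zero, Matrix.cons_val_one, Matrix.head_cons]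
    obtain ⟨xs, xj, xk⟩ := x
    simp only at *
    ext <;> simp <;> omega
  · -- right inverse
    intro τ hτ
    rw [mem_Tfin] at hτ
    obtain ⟨hlt, heq⟩ := hτ
    have h00 := hlt (0,0,0); have h01 := hlt (0,0,1); have h10 := hlt (0,1,0); have h11 := hlt (0,1,1)
    have he := heq 0
    simp only [Prod.mk_zero_zero, Prod.mk_one_one] at h00 h01 h10 h11 he
    funext β
    obtain ⟨e, y, z⟩ := β
    have he0 : e = 0 := Subsingleton.elim _ _
    subst he0
    fin_cases y <;> fin_cases z <;> simp [Prod.mk_zero_zero, Prod.mk_one_one] <;> omega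
  · -- terms agree
    intro x hx
    simp only [Finset.mem_filter, Finset.mem_product, Finset.mem_Ioo, Finset.mem_Ico] at hx
    obtain ⟨⟨hA, ⟨hB1a, hB1b⟩, hB2a, hB2b⟩, hc1, hc2, hc3, hc4⟩ := hx
    rw [Fintype.prod_prod_type, Fin.prod_univ_one, Fintype.prod_prod_type, Fin.prod_univ_two]
    simp only [Fin.prod_univ_two, Matrix.cons_val_zero, Matrix.cons_val_one, Matrix.head_cons]
    rw [seq_eq_xval σ hc1, seq_eq_xval σ hB1a, seq_eq_xval σ hc3, seq_eq_xval σ hB2a]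
    ring

/-- all value-fibers over the whole index set have even size -/
def EvAll {p : ℕ} (τ : Idx p → ℕ) : Prop :=
  ∀ n, Even #(Finset.univ.filter fun β : Idx p => τ β = n)

/-- all value-fibers within equation `e` have even size -/
def EvE {p : ℕ} (e : Fin p) (τ : Idx p → ℕ) : Prop :=
  ∀ n, Even #(Finset.univ.filter fun β : Idx p => β.1 = e ∧ τ β = n)

def restr (p : ℕ) (e : Fin p) (τ : Idx p → ℕ) : Idx 1 → ℕ := fun β => τ (e, β.2)

open Classical in
noncomputable def eps1 (τ : Idx 1 → ℕ) : ℝ := if EvAll τ then 1 else 0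

lemma card_restr {p : ℕ} (e : Fin p) (τ : Idx p → ℕ) (n : ℕ) :
    #(Finset.univ.filter fun β : Idx 1 => restr p e τ β = n)
      = #(Finset.univ.filter fun β : Idx p => β.1 = e ∧ τ β = n) := by
  classical
  refine Finset.card_nbij' (i := fun β : Idx 1 => (e, β.2)) (j := fun γ : Idx p => ((0 : Fin 1), γ.2))
    ?_ ?_ ?_ ?_
  · intro β hβ
    simp only [Finset.mem_coe, Finset.mem_filter, Finset.mem_univ, true_and] at *
    first | exact hβ | exact ⟨rfl, hβ⟩
  · intro γ hγ
    simp only [Finset.mem_coe, Finset.mem_filter, Finset.mem_univ, true_and] at *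
    obtain ⟨h1, h2⟩ := hγ
    show restr p e τ (0, γ.2) = n
    unfold restr
    simp only
    rw [show (e, γ.2) = γ from by rw [← h1]]
    exact h2
  · intro β _
    obtain ⟨z, y⟩ := β
    simp [Subsingleton.elim (0 : Fin 1) z]
  · intro γ hγ
    simp only [Finset.mem_coe, Finset.mem_filter, Finset.mem_univ, true_and] at hγ
    obtain ⟨h1, h2⟩ := hγ
    simp only
    rw [← h1]

lemma evAll_restr_iff {p : ℕ} (e : Fin p) (τ : Idx p → ℕ) :
    EvAll (restr p e τ) ↔ EvE e τ := by
  unfold EvAll EvE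
  refine forall_congr' (fun n => ?_)
  rw [card_restr]

lemma prod_restr {p : ℕ} (τ : Idx p → ℕ) (g : ℕ → ℝ) :
    ∏ e : Fin p, ∏ β : Idx 1, g (restr p e τ β) = ∏ β : Idx p, g (τ β) := by
  rw [Fintype.prod_prod_type (fun β : Idx p => g (τ β))]
  refine Finset.prod_congr rfl (fun e _ => ?_)
  rw [Fintype.prod_prod_type (fun β : Idx 1 => g (restr p e τ β)), Fin.prod_univ_one]
  rfl

lemma expect_ssac {ℓ : ℕ} : _root_.expect ℓ ssac = ∑ τ ∈ Tfin 1 ℓ, eps1 τ := by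
  classical
  unfold _root_.expect
  simp only [ssac_seq_Tfin]
  rw [Finset.sum_comm, Finset.sum_div]
  refine Finset.sum_congr rfl (fun τ hτ => ?_)
  have hb : ∀ β ∈ (Finset.univ : Finset (Idx 1)), τ β < ℓ := fun β _ => (mem_Tfin.1 hτ).1 β
  unfold eps1
  by_cases hEv : EvAll τ
  · rw [if_pos hEv, sum_prod_xval_even _ _ hb hEv]
    field_simp
  · rw [if_neg hEv]
    obtain ⟨n, hn⟩ := not_forall.1 hEv
    rw [sum_prod_xval_odd _ _ hb hn, zero_div]

lemma Bval_good {p ℓ : ℕ} {τ : Idx p → ℕ} (hτ : τ ∈ Tfin p ℓ)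
    (hg1 : EvAll τ) (hg2 : ∀ e, ¬ EvE e τ) :
    ∑ σ : Fin ℓ → Bool, ∏ e : Fin p,
      ((∏ β : Idx 1, xval ℓ σ (restr p e τ β)) - eps1 (restr p e τ)) = 2 ^ ℓ := by
  classical
  have heps : ∀ e, eps1 (restr p e τ) = 0 := by
    intro e
    unfold eps1
    rw [if_neg (fun h => hg2 e ((evAll_restr_iff e τ).1 h))]
  simp only [heps, sub_zero]
  have : ∀ σ : Fin ℓ → Bool, ∏ e : Fin p, ∏ β : Idx 1, xval ℓ σ (restr p e τ β)
      = ∏ β : Idx p, xval ℓ σ (τ β) := fun σ => prod_restr τ (xval ℓ σ)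
  simp only [this]
  exact sum_prod_xval_even _ _ (fun β _ => (mem_Tfin.1 hτ).1 β) hg1

lemma Bval_bad1 {p ℓ : ℕ} {τ : Idx p → ℕ} (hτ : τ ∈ Tfin p ℓ)
    {e0 : Fin p} (hg : EvE e0 τ) :
    ∑ σ : Fin ℓ → Bool, ∏ e : Fin p,
      ((∏ β : Idx 1, xval ℓ σ (restr p e τ β)) - eps1 (restr p e τ)) = 0 := by
  classical
  refine Finset.sum_eq_zero (fun σ _ => ?_)
  refine Finset.prod_eq_zero (Finset.mem_univ e0) ?_
  have h1 : ∏ β : Idx 1, xval ℓ σ (restr p e0 τ β) = 1 := by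
    refine prod_xval_eq_one σ _ _ (fun β _ => (mem_Tfin.1 hτ).1 _) ?_
    intro n
    rw [card_restr]
    exact hg n
  rw [h1]
  unfold eps1
  rw [if_pos ((evAll_restr_iff e0 τ).2 hg)]
  ring

lemma Bval_bad2 {p ℓ : ℕ} {τ : Idx p → ℕ} (hτ : τ ∈ Tfin p ℓ)
    (hg2 : ∀ e, ¬ EvE e τ) (hna : ¬ EvAll τ) :
    ∑ σ : Fin ℓ → Bool, ∏ e : Fin p,
      ((∏ β : Idx 1, xval ℓ σ (restr p e τ β)) - eps1 (restr p e τ)) = 0 := by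
  classical
  have heps : ∀ e, eps1 (restr p e τ) = 0 := by
    intro e
    unfold eps1
    rw [if_neg (fun h => hg2 e ((evAll_restr_iff e τ).1 h))]
  simp only [heps, sub_zero]
  have : ∀ σ : Fin ℓ → Bool, ∏ e : Fin p, ∏ β : Idx 1, xval ℓ σ (restr p e τ β)
      = ∏ β : Idx p, xval ℓ σ (τ β) := fun σ => prod_restr τ (xval ℓ σ)
  simp only [this]
  obtain ⟨n, hn⟩ := not_forall.1 hna
  exact sum_prod_xval_odd _ _ (fun β _ => (mem_Tfin.1 hτ).1 β) hn

open Classical in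
noncomputable def Gfin (p ℓ : ℕ) : Finset (Idx p → ℕ) :=
  (Tfin p ℓ).filter (fun τ => EvAll τ ∧ ∀ e, ¬ EvE e τ)

lemma mem_Gfin {p ℓ : ℕ} {τ : Idx p → ℕ} :
    τ ∈ Gfin p ℓ ↔ τ ∈ Tfin p ℓ ∧ EvAll τ ∧ ∀ e, ¬ EvE e τ := by
  classical
  unfold Gfin
  rw [Finset.mem_filter]

/-- The LHS: the central moment counts good assignments. -/
lemma cmom_eq_card (p ℓ : ℕ) : cmom p ℓ ssac = #(Gfin p ℓ) := by
  classical
  unfold cmom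
  rw [show _root_.expect ℓ (fun f => (ssac f - _root_.expect ℓ ssac) ^ p)
      = (∑ σ : Fin ℓ → Bool, (ssac (seq ℓ σ) - _root_.expect ℓ ssac) ^ p) / 2 ^ ℓ from rfl]
  have key : ∀ σ : Fin ℓ → Bool,
      (ssac (seq ℓ σ) - _root_.expect ℓ ssac) ^ p
      = ∑ t ∈ Fintype.piFinset (fun _ : Fin p => Tfin 1 ℓ),
          ∏ e : Fin p, ((∏ β : Idx 1, xval ℓ σ (t e β)) - eps1 (t e)) := by
    intro σ
    rw [ssac_seq_Tfin, expect_ssac, ← Finset.sum_sub_distrib]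
    rw [show (∑ τ ∈ Tfin 1 ℓ, ((∏ β : Idx 1, xval ℓ σ (τ β)) - eps1 τ)) ^ p
        = ∏ _e : Fin p, ∑ τ ∈ Tfin 1 ℓ, ((∏ β : Idx 1, xval ℓ σ (τ β)) - eps1 τ) from by
      rw [Finset.prod_const]; simp]
    rw [Finset.prod_univ_sum]
  simp only [key]
  rw [Finset.sum_comm, Finset.sum_div]
  -- reindex by gluing
  have reind : ∑ t ∈ Fintype.piFinset (fun _ : Fin p => Tfin 1 ℓ),
      (∑ σ : Fin ℓ → Bool, ∏ e : Fin p, ((∏ β : Idx 1, xval ℓ σ (t e β)) - eps1 (t e))) / 2 ^ ℓ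
      = ∑ τ ∈ Tfin p ℓ,
      (∑ σ : Fin ℓ → Bool, ∏ e : Fin p,
        ((∏ β : Idx 1, xval ℓ σ (restr p e τ β)) - eps1 (restr p e τ))) / 2 ^ ℓ := by
    refine Finset.sum_nbij' (i := fun t => fun β : Idx p => t β.1 ((0 : Fin 1), β.2))
      (j := fun τ => fun e => restr p e τ) ?_ ?_ ?_ ?_ ?_
    · intro t ht
      simp only [Fintype.mem_piFinset] at ht
      rw [mem_Tfin]
      constructor
      · rintro ⟨e, y, z⟩
        exact (mem_Tfin.1 (ht e)).1 _
      · intro e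
        exact (mem_Tfin.1 (ht e)).2 0
    · intro τ hτ
      simp only [Fintype.mem_piFinset]
      intro e
      rw [mem_Tfin]
      constructor
      · rintro ⟨z, y⟩
        exact (mem_Tfin.1 hτ).1 _
      · intro z
        have := (mem_Tfin.1 hτ).2 e
        exact this
    · intro t ht
      funext e
      funext β
      obtain ⟨z, y⟩ := β
      show t e ((0 : Fin 1), y) = t e (z, y)
      rw [Subsingleton.elim (0 : Fin 1) z]
    · intro τ hτ
      funext β
      rfl
    · intro t ht
      congr 1
  rw [reind]
  -- evaluate each term
  have eval : ∀ τ ∈ Tfin p ℓ,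
      (∑ σ : Fin ℓ → Bool, ∏ e : Fin p,
        ((∏ β : Idx 1, xval ℓ σ (restr p e τ β)) - eps1 (restr p e τ))) / 2 ^ ℓ
      = if (EvAll τ ∧ ∀ e, ¬ EvE e τ) then (1:ℝ) else 0 := by
    intro τ hτ
    by_cases hg2 : ∀ e, ¬ EvE e τ
    · by_cases hg1 : EvAll τ
      · rw [if_pos ⟨hg1, hg2⟩, Bval_good hτ hg1 hg2]
        field_simp
      · rw [if_neg (fun h => hg1 h.1), Bval_bad2 hτ hg2 hg1, zero_div]
    · obtain ⟨e0, he0⟩ := not_forall.1 hg2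
      rw [if_neg (fun h => hg2 h.2), Bval_bad1 hτ (not_not.1 he0), zero_div]
  rw [Finset.sum_congr rfl eval]
  rw [Finset.sum_boole]
  congr 1

-- bridge
lemma mem_Tfin_iff_AsEq {p ℓ : ℕ} {τ : Idx p → ℕ} : τ ∈ Tfin p ℓ ↔ τ ∈ AsEq p ℓ := by
  rw [mem_Tfin]; rfl

/-- the partition induced by an assignment: its fibers -/
def PartOf {p : ℕ} (τ : Idx p → ℕ) : Set (Set (Idx p)) :=
  {P | ∃ β, P = {γ | τ γ = τ β}}

lemma partOf_isPartition {p : ℕ} (τ : Idx p → ℕ) : Setoid.IsPartition (PartOf τ) := by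
  constructor
  · rintro ⟨β, hβ⟩
    have : β ∈ (∅ : Set (Idx p)) := hβ ▸ (show τ β = τ β from rfl)
    exact this
  · intro β
    refine ⟨{γ | τ γ = τ β}, ⟨⟨β, rfl⟩, rfl⟩, ?_⟩
    rintro P ⟨⟨β', rfl⟩, hβ⟩
    have hb : τ β = τ β' := hβ
    ext γ
    simp only [Set.mem_setOf_eq]
    omega
  
lemma induces_partOf {p : ℕ} (τ : Idx p → ℕ) : Induces τ (PartOf τ) := by
  intro β γ
  constructor
  · intro h
    exact ⟨{δ | τ δ = τ β}, ⟨β, rfl⟩, rfl, h.symm⟩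
  · rintro ⟨P, ⟨β', rfl⟩, h1, h2⟩
    exact (show τ β = τ β' from h1).trans (show τ γ = τ β' from h2).symm

lemma eq_partOf_of_induces {p : ℕ} {τ : Idx p → ℕ} {𝔓 : Set (Set (Idx p))}
    (hP : Setoid.IsPartition 𝔓) (h : Induces τ 𝔓) : 𝔓 = PartOf τ := by
  ext P
  constructor
  · intro hPmem
    have hne : P.Nonempty := by
      rcases Set.eq_empty_or_nonempty P with rfl | hne
      · exact absurd hPmem hP.1
      · exact hne
    obtain ⟨β, hβ⟩ := hne
    refine ⟨β, ?_⟩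
    ext γ
    constructor
    · intro hγ
      exact (h γ β).2 ⟨P, hPmem, hγ, hβ⟩
    · intro hγ
      obtain ⟨Q, hQmem, hγQ, hβQ⟩ := (h γ β).1 hγ
      obtain ⟨R, ⟨hR, -⟩, huniq⟩ := hP.2 β
      rwa [huniq P ⟨hPmem, hβ⟩, ← huniq Q ⟨hQmem, hβQ⟩]
  · rintro ⟨β, rfl⟩
    obtain ⟨Q, ⟨hQmem, hβQ⟩, -⟩ := hP.2 β
    have : Q = {γ | τ γ = τ β} := by
      ext γ
      constructor
      · intro hγ
        exact (h γ β).2 ⟨Q, hQmem, hγ, hβQ⟩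
      · intro hγ
        obtain ⟨R, hRmem, hγR, hβR⟩ := (h γ β).1 hγ
        obtain ⟨S, -, huniq⟩ := hP.2 β
        rwa [huniq Q ⟨hQmem, hβQ⟩, ← huniq R ⟨hRmem, hβR⟩]
    rw [← this]
    exact hQmem

lemma ncard_setOf {p : ℕ} (P : Idx p → Prop) [DecidablePred P] :
    {γ : Idx p | P γ}.ncard = #(Finset.univ.filter P) := by
  rw [← Set.ncard_coe_finset]
  congr 1
  ext γ
  simp

lemma evAll_iff {p : ℕ} (τ : Idx p → ℕ) : EvAll τ ↔ IsEvenPart p (PartOf τ) := by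
  classical
  constructor
  · rintro h P ⟨β, rfl⟩
    rw [ncard_setOf]
    exact h (τ β)
  · intro h n
    by_cases hex : ∃ β, τ β = n
    · obtain ⟨β, rfl⟩ := hex
      have := h {γ | τ γ = τ β} ⟨β, rfl⟩
      rwa [ncard_setOf] at this
    · have : (Finset.univ.filter fun β : Idx p => τ β = n) = ∅ :=
        Finset.filter_eq_empty_iff.2 (fun β _ hb => hex ⟨β, hb⟩)
      rw [this]
      simp
      
lemma evE_iff {p : ℕ} (e : Fin p) (τ : Idx p → ℕ) :
    EvE e τ ↔ IsEvenPart p (restrictPart p {e} (PartOf τ)) := by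
  classical
  constructor
  · rintro h Q ⟨hne, P, ⟨β, rfl⟩, rfl⟩
    have hset : {γ : Idx p | τ γ = τ β} ∩ {x : Idx p | x.1 ∈ ({e} : Set (Fin p))}
        = {γ : Idx p | γ.1 = e ∧ τ γ = τ β} := by
      ext γ; simp [and_comm]
    rw [hset, ncard_setOf]
    exact h (τ β)
  · intro h n
    by_cases hex : ∃ β : Idx p, β.1 = e ∧ τ β = n
    · obtain ⟨β, hβ1, hβ2⟩ := hex
      have hQ : ({γ : Idx p | γ.1 = e ∧ τ γ = τ β}) ∈ restrictPart p {e} (PartOf τ) := by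
        refine ⟨⟨β, hβ1, rfl⟩, {γ | τ γ = τ β}, ⟨β, rfl⟩, ?_⟩
        ext γ; simp [and_comm]
      have := h _ hQ
      rw [ncard_setOf] at this
      convert this using 2
      ext γ
      rw [hβ2]
    · have : (Finset.univ.filter fun β : Idx p => β.1 = e ∧ τ β = n) = ∅ :=
        Finset.filter_eq_empty_iff.2 (fun β _ hb => hex ⟨β, hb⟩)
      rw [this]
      simp

lemma partOf_mem_ConPart {p ℓ : ℕ} {τ : Idx p → ℕ} (hτ : τ ∈ Gfin p ℓ) :
    PartOf τ ∈ ConPart p := by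
  obtain ⟨hT, h1, h2⟩ := mem_Gfin.1 hτ
  refine ⟨partOf_isPartition τ, ⟨(evAll_iff τ).1 h1, fun e he => h2 e ((evE_iff e τ).2 he)⟩, ?_⟩
  exact ⟨ℓ, τ, mem_Tfin_iff_AsEq.1 hT, induces_partOf τ⟩

/-- The `p`-th central moment of `ssac` equals the sum over contributory
partitions `𝔓 ∈ Con(p)` of `|As(𝔓,=,ℓ)|`. -/
theorem central_moment_ssac_eq_sum_contributory (p ℓ : ℕ) :
    cmom p ℓ ssac = ∑ᶠ 𝔓 ∈ ConPart p, ((AsPart p ℓ 𝔓).ncard : ℝ) := by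
  classical
  rw [cmom_eq_card]
  have hfin : (ConPart p).Finite := Set.toFinite _
  rw [← hfin.coe_toFinset, finsum_mem_coe_finset]
  have h2 : ∀ 𝔓 ∈ hfin.toFinset, ((AsPart p ℓ 𝔓).ncard : ℝ)
      = (#((Gfin p ℓ).filter (fun τ => PartOf τ = 𝔓)) : ℝ) := by
    intro 𝔓 h𝔓
    rw [Set.Finite.mem_toFinset] at h𝔓
    obtain ⟨hPart, hGELO, hSat⟩ := h𝔓
    have hset : AsPart p ℓ 𝔓 = ↑((Gfin p ℓ).filter (fun τ => PartOf τ = 𝔓)) := by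
      ext τ
      simp only [Finset.coe_filter, Set.mem_setOf_eq, AsPart]
      constructor
      · rintro ⟨hAs, hInd⟩
        have hPO : PartOf τ = 𝔓 := (eq_partOf_of_induces hPart hInd).symm
        have hT : τ ∈ Tfin p ℓ := mem_Tfin_iff_AsEq.2 hAs
        refine ⟨mem_Gfin.2 ⟨hT, ?_, ?_⟩, hPO⟩
        · exact (evAll_iff τ).2 (hPO ▸ hGELO.1)
        · intro e he
          exact hGELO.2 e (hPO ▸ (evE_iff e τ).1 he)
      · rintro ⟨hG, hPO⟩
        obtain ⟨hT, -, -⟩ := mem_Gfin.1 hG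
        refine ⟨mem_Tfin_iff_AsEq.1 hT, ?_⟩
        rw [← hPO]
        exact induces_partOf τ
    rw [hset, Set.ncard_coe_finset]
  rw [Finset.sum_congr rfl h2]
  norm_cast
  refine Finset.card_eq_sum_card_fiberwise ?_
  intro τ hτ
  rw [Finset.mem_coe, Set.Finite.mem_toFinset]
  exact partOf_mem_ConPart hτ
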